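/- arXiv:2301.01724 — 2 statements merged into one kernel-verified Lean document; each statement's English description precedes it below -/
import Mathlib

section
/- Fix D ≥ 2, α ∈ (0,1), and suppose that for k = ⌊D/2⌋ we have α^D − α^{D-k-1} − α^k + 1 < 0. Then for every j with 1 ≤ j ≤ D−1, ∑_{i=1}^{j+1} α^{D-i} > ∑_{m=0}^{j-1} α^m. In particular, for every count c ∈ {0,...,D-1}, the minimum weighted sum over binary vectors with c+1 ones strictly exceeds the maximum weighted sum over binary vectors with c ones. -/
/-!
Multiplying by `1 - α` turns both sums into geometric-sum telescopes, and the claim becomes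
`1 + α ^ D < α ^ (D - 1 - j) + α ^ j`. Since `t ↦ α ^ t` is convex, `α ^ a + α ^ b` with
`a + b = D - 1` only decreases as the exponents are balanced, so it is smallest at the split
`{D - 1 - ⌊D/2⌋, ⌊D/2⌋}`, where the hypothesis gives the strict inequality.
-/

open Finset

theorem pow_add_pow_le_of_add_eq {R : Type*} [CommRing R] [LinearOrder R] [IsStrictOrderedRing R]
    {x : R} (hx₀ : 0 ≤ x) (hx₁ : x ≤ 1) {a b c d : ℕ}
    (hac : a ≤ c) (hcd : c ≤ d) (h : a + b = c + d) : x ^ c + x ^ d ≤ x ^ a + x ^ b := by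
  obtain ⟨e, rfl⟩ := Nat.exists_eq_add_of_le hac
  obtain rfl : b = d + e := by omega
  have hda : x ^ d ≤ x ^ a := pow_le_pow_of_le_one hx₀ hx₁ (by omega)
  have he : x ^ e ≤ 1 := pow_le_one₀ hx₀ hx₁
  have hprod := mul_nonneg (sub_nonneg.2 hda) (sub_nonneg.2 he)
  rw [pow_add, pow_add]
  linarith

theorem sum_Icc_pow_sub_mul_one_sub {R : Type*} [CommRing R] (x : R) {j n : ℕ} (hjn : j < n) :
    (∑ i ∈ Icc 1 (j + 1), x ^ (n - i)) * (1 - x) = x ^ (n - 1 - j) - x ^ n := by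
  rw [← Ico_add_one_right_eq_Icc, sum_Ico_reflect _ _ (by omega),
    geom_sum_Ico_mul_neg x (by omega)]
  congr 2
  omega

theorem stmt_11_general (D : ℕ) (α : ℝ) (hα : α ∈ Set.Ioo (0:ℝ) 1)
    (hF : α ^ D - α ^ (D - D / 2 - 1) - α ^ (D / 2) + 1 < 0) :
    ∀ j, 1 ≤ j → j ≤ D - 1 →
      ∑ i ∈ Finset.Icc 1 (j + 1), α ^ (D - i) > ∑ m ∈ Finset.range j, α ^ m := by
  intro j hj₁ hjD
  obtain ⟨h₀, h₁⟩ := hα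
  have hbalanced : α ^ (D - D / 2 - 1) + α ^ (D / 2) ≤ α ^ (D - 1 - j) + α ^ j := by
    rcases le_total j (D - 1 - j) with hj | hj
    · rw [add_comm (α ^ (D - 1 - j))]
      exact pow_add_pow_le_of_add_eq h₀.le h₁.le (by omega) (by omega) (by omega)
    · exact pow_add_pow_le_of_add_eq h₀.le h₁.le (by omega) (by omega) (by omega)
  refine lt_of_mul_lt_mul_right ?_ (sub_nonneg.2 h₁.le)
  rw [sum_Icc_pow_sub_mul_one_sub α (by omega), geom_sum_mul_neg]
  linarith

theorem stmt_11 (D : ℕ) (α : ℝ) (hD : 2 ≤ D) (hα : α ∈ Set.Ioo (0:ℝ) 1)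
    (hF : α ^ D - α ^ (D - D / 2 - 1) - α ^ (D / 2) + 1 < 0) :
    ∀ j, 1 ≤ j → j ≤ D - 1 →
      ∑ i ∈ Finset.Icc 1 (j + 1), α ^ (D - i) > ∑ m ∈ Finset.range j, α ^ m :=
  stmt_11_general D α hα hF
end

section
/- Fix D ≥ 1, α ∈ (0,1), A > 0, and let c = ∑_{i=1}^{D} α^{D-i} x_i for some x ∈ {0,A}^D with c ≥ A. Then there exists an integer k with 1 ≤ k ≤ D such that A(1 + α + ... + α^{k-1}) ≤ c < A(1 + α + ... + α^{k-1}) + A·α^k (where the second inequality is interpreted as c ≤ A(1+...+α^{D-1}) when k = D). -/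
/-!
Take `k` to be the largest index in `[1, D]` whose partial geometric sum `A (1 + ⋯ + α^(k-1))`
still lies below `c`. For `k < D` maximality gives the strict upper bound, since the next partial
sum is the current one plus `A α^k`; for `k = D` the bound holds because each coordinate is at
most `A`, so `c` is at most the measurement of the all-`A` block.
-/

open Finset

lemma Nat.exists_greatest_le {P : ℕ → Prop} [DecidablePred P] {m n : ℕ} (hmn : m ≤ n)
    (hm : P m) : ∃ k, m ≤ k ∧ k ≤ n ∧ P k ∧ (k < n → ¬ P (k + 1)) :=
  ⟨Nat.findGreatest P n, Nat.le_findGreatest hmn hm, Nat.findGreatest_le n,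
    Nat.findGreatest_spec hmn hm,
    fun hlt => Nat.findGreatest_is_greatest (Nat.lt_succ_self _) hlt⟩

lemma Fin.sum_univ_rev_eq_sum_range {M : Type*} [AddCommMonoid M] (f : ℕ → M) (n : ℕ) :
    ∑ i : Fin n, f (n - 1 - i.val) = ∑ j ∈ range n, f j := by
  rw [Fin.sum_univ_eq_sum_range (fun i => f (n - 1 - i)), ← sum_range_reflect]
  exact sum_congr rfl fun j hj => by rw [mem_range] at hj; congr 1; omega

lemma sum_pow_rev_mul_le_mul_geom_sum {α A : ℝ} (hα : 0 ≤ α) {D : ℕ} {x : Fin D → ℝ}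
    (hx : ∀ i, x i ≤ A) :
    ∑ i : Fin D, α ^ (D - 1 - i.val) * x i ≤ A * ∑ j ∈ range D, α ^ j :=
  calc ∑ i : Fin D, α ^ (D - 1 - i.val) * x i
      ≤ ∑ i : Fin D, A * α ^ (D - 1 - i.val) :=
        sum_le_sum fun i _ => by
          rw [mul_comm]; exact mul_le_mul_of_nonneg_right (hx i) (pow_nonneg hα _)
    _ = A * ∑ j ∈ range D, α ^ j := by
        rw [Fin.sum_univ_rev_eq_sum_range (fun j => A * α ^ j), mul_sum]

theorem stmt_13 (D : ℕ) (α A c : ℝ) (hD : 1 ≤ D) (hα : α ∈ Set.Ioo (0:ℝ) 1) (hA : 0 < A)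
    (x : Fin D → ℝ) (hx : ∀ i, x i = 0 ∨ x i = A)
    (hc : c = ∑ i, α ^ (D - 1 - i.val) * x i) (hcA : A ≤ c) :
    ∃ k, 1 ≤ k ∧ k ≤ D ∧
      A * ∑ j ∈ Finset.range k, α ^ j ≤ c ∧
      (k < D → c < A * ∑ j ∈ Finset.range k, α ^ j + A * α ^ k) ∧
      (k = D → c ≤ A * ∑ j ∈ Finset.range D, α ^ j) := by
  classical
  have h_one : A * ∑ j ∈ range 1, α ^ j ≤ c := by simpa using hcA
  obtain ⟨k, hk1, hkD, hk, hk_max⟩ :=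
    Nat.exists_greatest_le (P := fun k => A * ∑ j ∈ range k, α ^ j ≤ c) hD h_one
  refine ⟨k, hk1, hkD, hk, fun hlt => ?_, fun _ => ?_⟩
  · have h_succ := not_le.mp (hk_max hlt)
    rwa [sum_range_succ, mul_add] at h_succ
  · have hxA : ∀ i, x i ≤ A := fun i => by rcases hx i with h | h <;> rw [h]; exact hA.le
    exact hc ▸ sum_pow_rev_mul_le_mul_geom_sum hα.1.le hxA
end
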